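/- If two instantiations (Λ₁, Ω₁) and (Λ₂, Ω₂) of a recursive linear SEM (same zero patterns, Λ strictly upper triangular, Ω positive definite) induce the same covariance matrix Σ, and each variable has uncorrelated errors with all others (Ω diagonal), then Λ₁ = Λ₂ and Ω₁ = Ω₂; i.e., Markovian recursive linear models are globally identified. -/
import Mathlib

open Matrix Finset

lemma diag_mul_of_tri {n : ℕ} {M N : Matrix (Fin n) (Fin n) ℝ}
    (hM : M.BlockTriangular id) (hN : N.BlockTriangular id) (i : Fin n) :
    (M * N) i i = M i i * N i i := by
  rw [Matrix.mul_apply]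
  apply Finset.sum_eq_single i
  · intro k _ hk
    rcases lt_or_gt_of_ne hk with h | h
    · rw [hM h, zero_mul]
    · rw [hN h, mul_zero]
  · simp

lemma key {n : ℕ} (U : Matrix (Fin n) (Fin n) ℝ) (d : Fin n → ℝ)
    (Ω₂ : Matrix (Fin n) (Fin n) ℝ)
    (hU : U.BlockTriangular id) (hUd : ∀ i, U i i = 1)
    (hd : ∀ i, d i ≠ 0) (hΩ₂d : Ω₂.IsDiag)
    (heq : U.transpose * Matrix.diagonal d * U = Ω₂) : U = 1 := by
  have main : ∀ m : ℕ, ∀ i j : Fin n, i.val = m → i < j → U i j = 0 := by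
    intro m
    induction m using Nat.strong_induction_on with
    | _ m IH =>
      intro i j him hij
      have h0 : (U.transpose * Matrix.diagonal d * U) i j = 0 := by
        rw [heq]; exact hΩ₂d hij.ne
      have hexp : (U.transpose * Matrix.diagonal d * U) i j
          = ∑ k, U k i * d k * U k j := by
        rw [Matrix.mul_assoc, Matrix.mul_apply]
        congr 1; ext k
        rw [Matrix.diagonal_mul, Matrix.transpose_apply, mul_assoc]
      rw [hexp] at h0
      have hsingle : ∑ k, U k i * d k * U k j = d i * U i j := by
        rw [Finset.sum_eq_single i]
        · rw [hUd, one_mul]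
        · intro k _ hk
          rcases lt_or_gt_of_ne hk with h | h
          · -- k < i : U k j = 0 by IH since k < i < j
            rw [IH k.val (him ▸ h) k j rfl (h.trans hij), mul_zero]
          · -- i < k : U k i = 0 by triangularity
            rw [hU h, zero_mul, zero_mul]
        · simp
      rw [hsingle] at h0
      exact (mul_eq_zero.mp h0).resolve_left (hd i)
  ext i j
  rcases lt_trichotomy i j with h | h | h
  · rw [main i.val i j rfl h, Matrix.one_apply_ne h.ne]
  · subst h; rw [hUd, Matrix.one_apply_eq]
  · rw [hU h, Matrix.one_apply_ne h.ne']

/-- Markovian recursive linear models are globally identified: if two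
instantiations with strictly upper triangular `Λ` and diagonal positive definite
`Ω` induce the same covariance matrix, their parameters coincide. -/
theorem stmt_16 {n : ℕ} (Λ₁ Λ₂ Ω₁ Ω₂ : Matrix (Fin n) (Fin n) ℝ)
    (hΛ₁ : ∀ i j : Fin n, j ≤ i → Λ₁ i j = 0)
    (hΛ₂ : ∀ i j : Fin n, j ≤ i → Λ₂ i j = 0)
    (hΩ₁d : Ω₁.IsDiag) (hΩ₂d : Ω₂.IsDiag)
    (hΩ₁ : Ω₁.PosDef) (hΩ₂ : Ω₂.PosDef)
    (hSame : ((1 - Λ₁)⁻¹).transpose * Ω₁ * (1 - Λ₁)⁻¹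
      = ((1 - Λ₂)⁻¹).transpose * Ω₂ * (1 - Λ₂)⁻¹) :
    Λ₁ = Λ₂ ∧ Ω₁ = Ω₂ := by
  set A := 1 - Λ₁ with hAdef
  set B := 1 - Λ₂ with hBdef
  have hA : A.BlockTriangular id := fun i j h => by
    have hne : i ≠ j := (show (j:Fin n) < i from h).ne'
    simp [hAdef, Matrix.sub_apply, Matrix.one_apply_ne hne, hΛ₁ i j (le_of_lt h)]
  have hB : B.BlockTriangular id := fun i j h => by
    have hne : i ≠ j := (show (j:Fin n) < i from h).ne'
    simp [hBdef, Matrix.sub_apply, Matrix.one_apply_ne hne, hΛ₂ i j (le_of_lt h)]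
  have hAd : ∀ i, A i i = 1 := fun i => by
    simp [hAdef, Matrix.sub_apply, hΛ₁ i i le_rfl]
  have hBd : ∀ i, B i i = 1 := fun i => by
    simp [hBdef, Matrix.sub_apply, hΛ₂ i i le_rfl]
  have hdetA : A.det = 1 := by
    rw [Matrix.det_of_upperTriangular hA]; simp [hAd]
  have hdetB : B.det = 1 := by
    rw [Matrix.det_of_upperTriangular hB]; simp [hBd]
  haveI : Invertible A := A.invertibleOfIsUnitDet (by rw [hdetA]; exact isUnit_one)
  haveI : Invertible B := B.invertibleOfIsUnitDet (by rw [hdetB]; exact isUnit_one)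
  have hAinv : A⁻¹.BlockTriangular id := Matrix.blockTriangular_inv_of_blockTriangular hA
  have hAinvd : ∀ i, A⁻¹ i i = 1 := by
    intro i
    have := diag_mul_of_tri hA hAinv i
    rw [Matrix.mul_nonsing_inv A (by rw [hdetA]; exact isUnit_one)] at this
    simpa [hAd i] using this.symm
  set U := A⁻¹ * B with hUdef
  have hU : U.BlockTriangular id := hAinv.mul hB
  have hUd : ∀ i, U i i = 1 := fun i => by
    rw [hUdef, diag_mul_of_tri hAinv hB, hAinvd, hBd, one_mul]
  have hBinvB : B⁻¹ * B = 1 := Matrix.nonsing_inv_mul B (by rw [hdetB]; exact isUnit_one)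
  have hkey : U.transpose * Ω₁ * U = Ω₂ := by
    have : U.transpose * Ω₁ * U
        = B.transpose * (A⁻¹.transpose * Ω₁ * A⁻¹) * B := by
      rw [hUdef, Matrix.transpose_mul]; simp only [Matrix.mul_assoc]
    rw [this, hSame]
    have h1 : B.transpose * (B⁻¹).transpose = 1 := by
      rw [← Matrix.transpose_mul, hBinvB, Matrix.transpose_one]
    calc B.transpose * (B⁻¹.transpose * Ω₂ * B⁻¹) * B
        = (B.transpose * B⁻¹.transpose) * Ω₂ * (B⁻¹ * B) := by simp only [Matrix.mul_assoc]
      _ = Ω₂ := by rw [h1, hBinvB, Matrix.one_mul, Matrix.mul_one]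
  have hdpos : ∀ i, Ω₁.diag i ≠ 0 := by
    intro i
    have := (Matrix.posDef_diagonal_iff.mp (hΩ₁d.diagonal_diag ▸ hΩ₁)) i
    exact ne_of_gt this
  have hU1 : U = 1 := by
    apply key U Ω₁.diag Ω₂ hU hUd hdpos hΩ₂d
    rw [hΩ₁d.diagonal_diag]; exact hkey
  have hAB : A = B := by
    have : A * U = A * 1 := by rw [hU1]
    rw [hUdef, ← Matrix.mul_assoc, Matrix.mul_nonsing_inv A (by rw [hdetA]; exact isUnit_one),
      Matrix.one_mul, Matrix.mul_one] at this
    exact this.symm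
  have hΛ : Λ₁ = Λ₂ := by
    have := hAB
    rw [hAdef, hBdef, sub_right_inj] at this
    exact this
  refine ⟨hΛ, ?_⟩
  rw [← hkey, hU1, Matrix.transpose_one, Matrix.one_mul, Matrix.mul_one]
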